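/- Define x̄(x) = 2√(u'(x)), ū(x) = u(x) − u'(x)·x, p̄(x) = −x√(u'(x)) along a smooth function u with u' > 0 and u'' ≠ 0. If ū, viewed as a function of x̄ (via the invertible change of variable x ↦ x̄(x)), satisfies d³ū/dx̄³ = 0, then u satisfies u''' = 3(u'')²/(2u'). -/

import Mathlib

/-!
Write `s = 2 √u'`, so that `s' = u'' / √u'` does not vanish. Differentiating the identity
`v ∘ s = F` gives `v' ∘ s = F' / s'`; starting from `F = u - x u'` this yields successively
`v' ∘ s = -x √u'`, `v'' ∘ s = -u'/u'' - x/2` and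
`v''' ∘ s = (u' u''' / u''² - 3/2) · √u' / u''`, whose vanishing is the claimed equation.
-/

open Filter Topology
open scoped ContDiff

theorem deriv_eq_inv_smul_of_comp_eventuallyEq {𝕜 E : Type*} [NontriviallyNormedField 𝕜]
    [NormedAddCommGroup E] [NormedSpace 𝕜 E] {w F : 𝕜 → E} {s : 𝕜 → 𝕜} {x s' : 𝕜} {F' : E}
    (hw : DifferentiableAt 𝕜 w (s x)) (hs : HasDerivAt s s' x) (hs' : s' ≠ 0)
    (hF : HasDerivAt F F' x) (hwF : w ∘ s =ᶠ[𝓝 x] F) :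
    deriv w (s x) = s'⁻¹ • F' := by
  have hchain : s' • deriv w (s x) = F' :=
    (hw.hasDerivAt.scomp x hs).unique (hF.congr_of_eventuallyEq hwF)
  rw [← hchain, inv_smul_smul₀ hs']

theorem hasDerivAt_two_mul_sqrt {f : ℝ → ℝ} {f' x : ℝ} (hf : HasDerivAt f f' x) (hx : 0 < f x) :
    HasDerivAt (fun y ↦ 2 * √(f y)) (f' / √(f x)) x := by
  refine ((hf.sqrt hx.ne').const_mul 2).congr_deriv ?_
  field_simp

theorem ContDiffOn.hasDerivAt_iteratedDeriv {𝕜 E : Type*} [NontriviallyNormedField 𝕜]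
    [NormedAddCommGroup E] [NormedSpace 𝕜 E] {I : Set 𝕜} (hI : IsOpen I) {u : 𝕜 → E}
    {N : WithTop ℕ∞} {n : ℕ} (hu : ContDiffOn 𝕜 N u I) (hn : n < N) {x : 𝕜} (hx : x ∈ I) :
    HasDerivAt (iteratedDeriv n u) (iteratedDeriv (n + 1) u x) x := by
  have hwithin : DifferentiableAt 𝕜 (iteratedDerivWithin n u I) x :=
    (hu.differentiableOn_iteratedDerivWithin hn hI.uniqueDiffOn x hx)
      |>.differentiableAt (hI.mem_nhds hx)
  have hdiff : DifferentiableAt 𝕜 (iteratedDeriv n u) x :=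
    hwithin.congr_of_eventuallyEq <|
      eventually_of_mem (hI.mem_nhds hx) fun y hy ↦ (iteratedDerivWithin_of_isOpen hI hy).symm
  rw [iteratedDeriv_succ]
  exact hdiff.hasDerivAt

theorem natCast_lt_infty (n : ℕ) : (n : WithTop ℕ∞) < ∞ :=
  mod_cast ENat.natCast_lt_top n

section

variable {I : Set ℝ} {u : ℝ → ℝ}

theorem deriv_comp_two_mul_sqrt_eq (hI : IsOpen I) (hu : ContDiffOn ℝ ∞ u I)
    (hp : ∀ x ∈ I, 0 < iteratedDeriv 1 u x) (hq : ∀ x ∈ I, iteratedDeriv 2 u x ≠ 0)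
    {w F F' : ℝ → ℝ} (hw : Differentiable ℝ w) (hF : ∀ x ∈ I, HasDerivAt F (F' x) x)
    (hwF : ∀ x ∈ I, w (2 * √(iteratedDeriv 1 u x)) = F x) {x : ℝ} (hx : x ∈ I) :
    deriv w (2 * √(iteratedDeriv 1 u x)) =
      F' x * √(iteratedDeriv 1 u x) / iteratedDeriv 2 u x := by
  have hs := hasDerivAt_two_mul_sqrt
    (hu.hasDerivAt_iteratedDeriv hI (natCast_lt_infty 1) hx) (hp x hx)
  have hsqrt : √(iteratedDeriv 1 u x) ≠ 0 := (Real.sqrt_pos.2 (hp x hx)).ne'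
  rw [deriv_eq_inv_smul_of_comp_eventuallyEq (hw _) hs (div_ne_zero (hq x hx) hsqrt) (hF x hx)
    (eventually_of_mem (hI.mem_nhds hx) hwF), smul_eq_mul]
  field_simp

theorem iteratedDeriv_one_comp_two_mul_sqrt (hI : IsOpen I) (hu : ContDiffOn ℝ ∞ u I)
    (hp : ∀ x ∈ I, 0 < iteratedDeriv 1 u x) (hq : ∀ x ∈ I, iteratedDeriv 2 u x ≠ 0)
    {v : ℝ → ℝ} (hv : Differentiable ℝ v)
    (hcomp : ∀ x ∈ I, v (2 * √(iteratedDeriv 1 u x)) = u x - iteratedDeriv 1 u x * x)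
    (x : ℝ) (hx : x ∈ I) :
    iteratedDeriv 1 v (2 * √(iteratedDeriv 1 u x)) = -x * √(iteratedDeriv 1 u x) := by
  have hF (y : ℝ) (hy : y ∈ I) : HasDerivAt (fun y ↦ u y - iteratedDeriv 1 u y * y)
      (-(iteratedDeriv 2 u y * y)) y := by
    have hu0 := hu.hasDerivAt_iteratedDeriv hI (natCast_lt_infty 0) hy
    have hu1 := hu.hasDerivAt_iteratedDeriv hI (natCast_lt_infty 1) hy
    rw [iteratedDeriv_zero] at hu0
    exact (hu0.sub (hu1.mul (hasDerivAt_id y))).congr_deriv (by simp)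
  rw [iteratedDeriv_one, deriv_comp_two_mul_sqrt_eq hI hu hp hq hv hF hcomp hx]
  have hq' := hq x hx
  field_simp

theorem iteratedDeriv_two_comp_two_mul_sqrt (hI : IsOpen I) (hu : ContDiffOn ℝ ∞ u I)
    (hp : ∀ x ∈ I, 0 < iteratedDeriv 1 u x) (hq : ∀ x ∈ I, iteratedDeriv 2 u x ≠ 0)
    {v : ℝ → ℝ} (hv : Differentiable ℝ (iteratedDeriv 1 v))
    (h1 : ∀ x ∈ I, iteratedDeriv 1 v (2 * √(iteratedDeriv 1 u x)) = -x * √(iteratedDeriv 1 u x))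
    (x : ℝ) (hx : x ∈ I) :
    iteratedDeriv 2 v (2 * √(iteratedDeriv 1 u x)) =
      -iteratedDeriv 1 u x / iteratedDeriv 2 u x - x / 2 := by
  have hF (y : ℝ) (hy : y ∈ I) : HasDerivAt (fun y ↦ -y * √(iteratedDeriv 1 u y))
      (-√(iteratedDeriv 1 u y) - y * iteratedDeriv 2 u y / (2 * √(iteratedDeriv 1 u y))) y :=
    have hu1 := hu.hasDerivAt_iteratedDeriv hI (natCast_lt_infty 1) hy
    ((hasDerivAt_neg y).mul (hu1.sqrt (hp y hy).ne')).congr_deriv (by ring)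
  rw [iteratedDeriv_succ, deriv_comp_two_mul_sqrt_eq hI hu hp hq hv hF h1 hx]
  have hq' := hq x hx
  have hp' := hp x hx
  field_simp
  rw [Real.sq_sqrt hp'.le]
  ring

theorem iteratedDeriv_three_comp_two_mul_sqrt (hI : IsOpen I) (hu : ContDiffOn ℝ ∞ u I)
    (hp : ∀ x ∈ I, 0 < iteratedDeriv 1 u x) (hq : ∀ x ∈ I, iteratedDeriv 2 u x ≠ 0)
    {v : ℝ → ℝ} (hv : Differentiable ℝ (iteratedDeriv 2 v))
    (h2 : ∀ x ∈ I, iteratedDeriv 2 v (2 * √(iteratedDeriv 1 u x)) =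
      -iteratedDeriv 1 u x / iteratedDeriv 2 u x - x / 2)
    (x : ℝ) (hx : x ∈ I) :
    iteratedDeriv 3 v (2 * √(iteratedDeriv 1 u x)) =
      (iteratedDeriv 1 u x * iteratedDeriv 3 u x / iteratedDeriv 2 u x ^ 2 - 3 / 2) *
        √(iteratedDeriv 1 u x) / iteratedDeriv 2 u x := by
  have hF (y : ℝ) (hy : y ∈ I) :
      HasDerivAt (fun y ↦ -iteratedDeriv 1 u y / iteratedDeriv 2 u y - y / 2)
        (iteratedDeriv 1 u y * iteratedDeriv 3 u y / iteratedDeriv 2 u y ^ 2 - 3 / 2) y := by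
    have hu1 := hu.hasDerivAt_iteratedDeriv hI (natCast_lt_infty 1) hy
    have hu2 := hu.hasDerivAt_iteratedDeriv hI (natCast_lt_infty 2) hy
    have hq' := hq y hy
    refine ((hu1.neg.div hu2 hq').sub ((hasDerivAt_id y).div_const 2)).congr_deriv ?_
    simp only [Pi.neg_apply]
    field_simp
    ring
  rw [iteratedDeriv_succ, deriv_comp_two_mul_sqrt_eq hI hu hp hq hv hF h2 hx]

end

theorem stmt_14_general (I : Set ℝ) (hI : IsOpen I)
    (u : ℝ → ℝ) (hu : ContDiffOn ℝ (⊤ : ℕ∞) u I)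
    (hp : ∀ x ∈ I, 0 < deriv u x) (hq : ∀ x ∈ I, iteratedDeriv 2 u x ≠ 0)
    (v : ℝ → ℝ) (hv : ContDiff ℝ (⊤ : ℕ∞) v)
    (hcomp : ∀ x ∈ I, v (2 * Real.sqrt (deriv u x)) = u x - deriv u x * x)
    (h3 : ∀ x ∈ I, iteratedDeriv 3 v (2 * Real.sqrt (deriv u x)) = 0) :
    ∀ x ∈ I, iteratedDeriv 3 u x = 3 * (iteratedDeriv 2 u x) ^ 2 / (2 * deriv u x) := by
  intro x hx
  simp only [← iteratedDeriv_one] at hp hcomp h3 ⊢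
  have hv' (n : ℕ) : Differentiable ℝ (iteratedDeriv n v) :=
    hv.differentiable_iteratedDeriv n (natCast_lt_infty n)
  have h1 := iteratedDeriv_one_comp_two_mul_sqrt hI hu hp hq (hv.differentiable (by simp)) hcomp
  have h2 := iteratedDeriv_two_comp_two_mul_sqrt hI hu hp hq (hv' 1) h1
  have h3' := iteratedDeriv_three_comp_two_mul_sqrt hI hu hp hq (hv' 2) h2 x hx
  have hratio : iteratedDeriv 1 u x * iteratedDeriv 3 u x / iteratedDeriv 2 u x ^ 2 = 3 / 2 := by
    rw [h3 x hx, eq_comm, div_eq_zero_iff, mul_eq_zero, sub_eq_zero] at h3'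
    exact (h3'.resolve_right (hq x hx)).resolve_right (Real.sqrt_pos.2 (hp x hx)).ne'
  have hp' := hp x hx
  have hq' := hq x hx
  field_simp at hratio ⊢
  linarith

theorem stmt_14 (I : Set ℝ) (hI : IsOpen I) (hI' : I.OrdConnected)
    (u : ℝ → ℝ) (hu : ContDiffOn ℝ (⊤ : ℕ∞) u I)
    (hp : ∀ x ∈ I, 0 < deriv u x) (hq : ∀ x ∈ I, iteratedDeriv 2 u x ≠ 0)
    (v : ℝ → ℝ) (hv : ContDiff ℝ (⊤ : ℕ∞) v)
    (hcomp : ∀ x ∈ I, v (2 * Real.sqrt (deriv u x)) = u x - deriv u x * x)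
    (h3 : ∀ x ∈ I, iteratedDeriv 3 v (2 * Real.sqrt (deriv u x)) = 0) :
    ∀ x ∈ I, iteratedDeriv 3 u x = 3 * (iteratedDeriv 2 u x) ^ 2 / (2 * deriv u x) :=
  stmt_14_general I hI u hu hp hq v hv hcomp h3
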